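/- Let a and b be nonzero integers, n a positive integer such that aj + b ≠ 0 for every integer j with 1 ≤ j ≤ n, and k a nonnegative integer. Then ∑_{j=1}^{n} 1/(aj+b)^{2k+1} = -1/(2b^{2k+1}) + 1/(2(an+b)^{2k+1}) - ((-1)^{k}(2π)^{2k+1}/2) ∫_{0}^{1} [ ∑_{j=0}^{k} B_{2j}(2-2^{2j})(1-u)^{2k+1-2j}/((2j)!(2k+1-2j)!) ]·( cos(2π(an+b)u) - cos(2πbu) )·cot(πau) du. -/

import Mathlib

/-!
Write `m_i = a i + b`. Since `(cos (y + 2s) - cos y) cot s = -(sin (y + 2s) + sin y)`, the factor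
`(cos (2π m_n u) - cos (2π m_0 u)) cot (π a u)` telescopes to
`-∑_{i<n} (sin (2π m_{i+1} u) + sin (2π m_i u))` off the null set where `sin (π a u) = 0`.

The kernel `Q_k(u) = bernoulliKernel k u = ∑_j w_j (1-u)^{2k+1-2j} / (2k+1-2j)!`, with
`w_j = B_{2j} (2 - 2^{2j}) / (2j)!`, satisfies `Q_k(0) = δ_{k0}`: up to a factorial this is
`2 B_n(1) - 2^n B_n(1/2) = 0` for odd `n = 2k+1 ≥ 3`. Integrating by parts twice against
`sin (c u)` with `sin c = 0` then gives
`∫₀¹ Q_k(u) sin (c u) du = δ_{k0}/c - (1/c²) ∫₀¹ Q_{k-1}(u) sin (c u) du = (-1)^k / c^{2k+1}`.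
Hence the integral is a trapezoidal sum of the `1 / m_i^{2k+1}`, which differs from
`∑_{j=1}^n 1 / m_j^{2k+1}` by the two boundary terms.
-/

open Real Finset intervalIntegral

lemma Polynomial.bernoulli_eval_eq_sum (n : ℕ) (x : ℚ) :
    (bernoulli n).eval x = ∑ i ∈ range (n + 1), _root_.bernoulli i * n.choose i * x ^ (n - i) := by
  simp [Polynomial.bernoulli, Polynomial.eval_finsetSum]

lemma Polynomial.bernoulli_eval_half_of_odd {n : ℕ} (hn : Odd n) :
    (bernoulli n).eval (1 / 2) = 0 := by
  have h := bernoulli_eval_one_sub n (1 / 2)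
  rw [hn.neg_one_pow] at h
  norm_num at h
  linarith

lemma sum_choose_mul_bernoulli_mul_two_sub_two_pow {n : ℕ} (hn : Odd n) (h1 : 1 < n) :
    ∑ i ∈ range (n + 1), (n.choose i : ℚ) * bernoulli i * (2 - 2 ^ i) = 0 := by
  have hone : ∑ i ∈ range (n + 1), (n.choose i : ℚ) * bernoulli i = 0 := by
    rw [← bernoulli'_eq_zero_of_odd hn h1, ← Polynomial.bernoulli_eval_one,
      Polynomial.bernoulli_eval_eq_sum]
    simp [mul_comm]
  have hhalf : ∑ i ∈ range (n + 1), (n.choose i : ℚ) * bernoulli i * 2 ^ i = 0 := by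
    have h := congrArg ((2 : ℚ) ^ n * ·) (Polynomial.bernoulli_eval_half_of_odd hn)
    simp only [Polynomial.bernoulli_eval_eq_sum, mul_sum, mul_zero] at h
    rw [← h]
    refine sum_congr rfl fun i hi => ?_
    have hi : i ≤ n := Nat.lt_succ_iff.mp (mem_range.mp hi)
    have h2 : (2 : ℚ) ^ n * (1 / 2) ^ (n - i) = 2 ^ i := by
      rw [one_div, inv_pow, ← div_eq_mul_inv, div_eq_iff (by positivity), ← pow_add,
        Nat.add_sub_cancel' hi]
    rw [← h2]
    ring
  simp only [mul_sub, sum_sub_distrib, ← sum_mul, hone, hhalf]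
  ring

lemma Finset.sum_range_two_mul {M : Type*} [AddCommMonoid M] (f : ℕ → M) (m : ℕ) :
    ∑ i ∈ range (2 * m), f i = ∑ j ∈ range m, (f (2 * j) + f (2 * j + 1)) := by
  induction m with
  | zero => simp
  | succ m ih =>
    rw [mul_add, mul_one, sum_range_succ, sum_range_succ, sum_range_succ, ih, add_assoc]

lemma sum_bernoulli_mul_two_sub_two_pow_div_factorial (m : ℕ) :
    ∑ j ∈ range (m + 1), (bernoulli (2 * j) : ℚ) * (2 - 2 ^ (2 * j)) /
        ((2 * j).factorial * (2 * m + 1 - 2 * j).factorial) = if m = 0 then 1 else 0 := by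
  rcases eq_or_ne m 0 with rfl | hm
  · norm_num
  rw [if_neg hm]
  set n := 2 * m + 1
  have hodd : ∀ j,
      (n.choose (2 * j + 1) : ℚ) * bernoulli (2 * j + 1) * (2 - 2 ^ (2 * j + 1)) = 0 := by
    intro j
    rcases eq_or_ne j 0 with rfl | hj
    · norm_num
    · rw [bernoulli_eq_zero_of_odd (odd_two_mul_add_one j) (by omega)]; simp
  have h := sum_choose_mul_bernoulli_mul_two_sub_two_pow (n := n) (odd_two_mul_add_one m) (by omega)
  rw [show n + 1 = 2 * (m + 1) by omega, sum_range_two_mul] at h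
  simp only [hodd, add_zero] at h
  rw [← mul_right_inj' (Nat.cast_ne_zero.2 n.factorial_ne_zero : (n.factorial : ℚ) ≠ 0), mul_zero,
    ← h, mul_sum]
  refine sum_congr rfl fun j hj => ?_
  have hj : 2 * j ≤ n := by have := mem_range.mp hj; omega
  rw [Nat.cast_choose ℚ hj]
  field_simp

lemma sum_mul_eq_neg_one_pow_div_of_recurrence {K : Type*} [Field K] (w I : ℕ → K) (c : K)
    (hw : ∀ m, ∑ j ∈ range (m + 1), w j / (2 * m + 1 - 2 * j).factorial = if m = 0 then 1 else 0)
    (hI₁ : I 1 = 1 / c) (hI : ∀ r, I (r + 2) = 1 / (c * (r + 2).factorial) - I r / c ^ 2)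
    (k : ℕ) : ∑ j ∈ range (k + 1), w j * I (2 * k + 1 - 2 * j) = (-1) ^ k / c ^ (2 * k + 1) := by
  induction k with
  | zero =>
    have hw₀ : w 0 = 1 := by simpa using hw 0
    simp [hw₀, hI₁]
  | succ k ih =>
    have hstep : ∀ j ∈ range (k + 1), w j * I (2 * (k + 1) + 1 - 2 * j) =
        w j / (2 * (k + 1) + 1 - 2 * j).factorial / c - w j * I (2 * k + 1 - 2 * j) / c ^ 2 := by
      intro j hj
      rw [show 2 * (k + 1) + 1 - 2 * j = 2 * k + 1 - 2 * j + 2 by have := mem_range.mp hj; omega,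
        hI]
      ring
    have hw' := hw (k + 1)
    rw [if_neg k.succ_ne_zero, sum_range_succ, show 2 * (k + 1) + 1 - 2 * (k + 1) = 1 by omega,
      ← eq_neg_iff_add_eq_zero] at hw'
    rw [sum_range_succ, show 2 * (k + 1) + 1 - 2 * (k + 1) = 1 by omega, sum_congr rfl hstep,
      sum_sub_distrib, ← sum_div, ← sum_div, ih, hw', hI₁]
    rw [Nat.factorial_one, Nat.cast_one, div_one] at hw'
    ring

lemma hasDerivAt_one_sub_pow_div_factorial (r : ℕ) (x : ℝ) :
    HasDerivAt (fun u : ℝ => (1 - u) ^ (r + 1) / (r + 1).factorial)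
      (-((1 - x) ^ r / r.factorial)) x := by
  have h : HasDerivAt (fun u : ℝ => (1 - u) ^ (r + 1)) ((r + 1 : ℕ) * (1 - x) ^ r * (-1)) x := by
    simpa using ((hasDerivAt_id x).const_sub 1).fun_pow (r + 1)
  refine (h.div_const ((r + 1).factorial : ℝ)).congr_deriv ?_
  rw [Nat.factorial_succ]
  push_cast
  field_simp

section Moments

variable {c : ℝ}

noncomputable def sinMoment (c : ℝ) (r : ℕ) : ℝ :=
  ∫ u in (0 : ℝ)..1, (1 - u) ^ r / r.factorial * sin (c * u)

noncomputable def cosMoment (c : ℝ) (r : ℕ) : ℝ :=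
  ∫ u in (0 : ℝ)..1, (1 - u) ^ r / r.factorial * cos (c * u)

lemma sinMoment_succ (hc : c ≠ 0) (r : ℕ) :
    sinMoment c (r + 1) = 1 / (c * (r + 1).factorial) - cosMoment c r / c := by
  have hcos (x : ℝ) : HasDerivAt (fun u => -cos (c * u) / c) (sin (c * x)) x := by
    refine ((((hasDerivAt_id' x).const_mul c).cos.neg).div_const c).congr_deriv ?_
    field_simp
  have hrest : ∫ x in (0 : ℝ)..1, -((1 - x) ^ r / r.factorial) * (-cos (c * x) / c) =
      cosMoment c r / c := by
    rw [cosMoment, ← integral_div]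
    exact integral_congr fun x _ => by ring
  rw [sinMoment, integral_mul_deriv_eq_deriv_mul
    (fun x _ => hasDerivAt_one_sub_pow_div_factorial r x) (fun x _ => hcos x)
    (by apply Continuous.intervalIntegrable; fun_prop)
    (by apply Continuous.intervalIntegrable; fun_prop), hrest]
  simp [field]

lemma cosMoment_succ (hc : c ≠ 0) (r : ℕ) : cosMoment c (r + 1) = sinMoment c r / c := by
  have hsin (x : ℝ) : HasDerivAt (fun u => sin (c * u) / c) (cos (c * x)) x := by
    refine ((((hasDerivAt_id' x).const_mul c).sin).div_const c).congr_deriv ?_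
    field_simp
  have hrest : ∫ x in (0 : ℝ)..1, -((1 - x) ^ r / r.factorial) * (sin (c * x) / c) =
      -(sinMoment c r / c) := by
    rw [sinMoment, ← integral_div, ← integral_neg]
    exact integral_congr fun x _ => by ring
  rw [cosMoment, integral_mul_deriv_eq_deriv_mul
    (fun x _ => hasDerivAt_one_sub_pow_div_factorial r x) (fun x _ => hsin x)
    (by apply Continuous.intervalIntegrable; fun_prop)
    (by apply Continuous.intervalIntegrable; fun_prop), hrest]
  simp

lemma cosMoment_zero (hc : c ≠ 0) : cosMoment c 0 = sin c / c := by
  simp [cosMoment, integral_comp_mul_left (fun x => cos x) hc, div_eq_inv_mul]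

lemma sinMoment_one (hc : c ≠ 0) (hs : sin c = 0) : sinMoment c 1 = 1 / c := by
  rw [sinMoment_succ hc, cosMoment_zero hc, hs]
  simp

lemma sinMoment_add_two (hc : c ≠ 0) (r : ℕ) :
    sinMoment c (r + 2) = 1 / (c * (r + 2).factorial) - sinMoment c r / c ^ 2 := by
  rw [sinMoment_succ hc, cosMoment_succ hc]
  ring

noncomputable def bernoulliKernel (k : ℕ) (u : ℝ) : ℝ :=
  ∑ j ∈ range (k + 1), (bernoulli (2 * j) : ℝ) * (2 - 2 ^ (2 * j)) *
    (1 - u) ^ (2 * k + 1 - 2 * j) / ((2 * j).factorial * (2 * k + 1 - 2 * j).factorial)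

lemma integral_bernoulliKernel_mul_sin (hc : c ≠ 0) (hs : sin c = 0) (k : ℕ) :
    ∫ u in (0 : ℝ)..1, bernoulliKernel k u * sin (c * u) = (-1) ^ k / c ^ (2 * k + 1) := by
  set w : ℕ → ℝ := fun j => (bernoulli (2 * j) : ℝ) * (2 - 2 ^ (2 * j)) / (2 * j).factorial
  have hw (m : ℕ) : ∑ j ∈ range (m + 1), w j / (2 * m + 1 - 2 * j).factorial =
      if m = 0 then 1 else 0 := by
    rw [show (if m = 0 then (1 : ℝ) else 0) = ((if m = 0 then 1 else 0 : ℚ) : ℝ) by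
      split_ifs <;> simp, ← sum_bernoulli_mul_two_sub_two_pow_div_factorial m]
    push_cast
    exact sum_congr rfl fun j _ => by simp only [w]; ring
  have hsplit : (fun u => bernoulliKernel k u * sin (c * u)) =
      fun u => ∑ j ∈ range (k + 1), w j *
        ((1 - u) ^ (2 * k + 1 - 2 * j) / (2 * k + 1 - 2 * j).factorial * sin (c * u)) := by
    funext u
    rw [bernoulliKernel, sum_mul]
    exact sum_congr rfl fun j _ => by simp only [w]; ring
  rw [hsplit, integral_finsetSum fun j _ => by apply Continuous.intervalIntegrable; fun_prop]
  simp only [integral_const_mul]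
  exact sum_mul_eq_neg_one_pow_div_of_recurrence w (sinMoment c) c hw (sinMoment_one hc hs)
    (sinMoment_add_two hc) k

end Moments

lemma cos_add_two_mul_sub_cos_mul_cot {s : ℝ} (hs : sin s ≠ 0) (y : ℝ) :
    (cos (y + 2 * s) - cos y) * cot s = -(sin (y + 2 * s) + sin y) := by
  obtain ⟨t, rfl⟩ : ∃ t, y = t - s := ⟨y + s, by ring⟩
  rw [cot_eq_cos_div_sin, show t - s + 2 * s = t + s by ring, cos_add, cos_sub, sin_add, sin_sub]
  field_simp
  ring

lemma cos_add_two_mul_sub_cos_mul_cot_eq_sum {s : ℝ} (hs : sin s ≠ 0) (x : ℝ) (n : ℕ) :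
    (cos (x + 2 * n * s) - cos x) * cot s =
      -∑ i ∈ range n, (sin (x + 2 * (i + 1 : ℕ) * s) + sin (x + 2 * i * s)) := by
  induction n with
  | zero => simp
  | succ n ih =>
    have h := cos_add_two_mul_sub_cos_mul_cot hs (x + 2 * n * s)
    rw [show x + 2 * n * s + 2 * s = x + 2 * (n + 1 : ℕ) * s by push_cast; ring] at h
    rw [sum_range_succ]
    linear_combination h + ih

lemma continuous_bernoulliKernel (k : ℕ) : Continuous (bernoulliKernel k) := by
  unfold bernoulliKernel
  fun_prop

lemma countable_setOf_sin_mul_eq_zero {c : ℝ} (hc : c ≠ 0) :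
    {u : ℝ | sin (c * u) = 0}.Countable := by
  refine (Set.countable_range fun q : ℤ => q * π / c).mono fun u hu => ?_
  obtain ⟨q, hq⟩ := sin_eq_zero_iff.mp hu
  exact ⟨q, by simp only [hq]; field_simp⟩

lemma Finset.two_mul_sum_Icc_one_eq {R : Type*} [CommRing R] (v : ℕ → R) (n : ℕ) :
    2 * ∑ j ∈ Icc 1 n, v j = v n - v 0 + ∑ i ∈ range n, (v (i + 1) + v i) := by
  induction n with
  | zero => simp
  | succ n ih =>
    rw [sum_Icc_succ_top (by omega), sum_range_succ]
    linear_combination ih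

lemma integral_bernoulliKernel_mul_cos_sub_cos_mul_cot (a b : ℤ) (ha : a ≠ 0) (n k : ℕ)
    (hab : ∀ i ≤ n, (a : ℝ) * i + b ≠ 0) :
    ∫ u in (0 : ℝ)..1, bernoulliKernel k u *
        (cos (2 * π * (a * n + b) * u) - cos (2 * π * b * u)) * cot (π * a * u) =
      -((-1) ^ k / (2 * π) ^ (2 * k + 1) * ∑ i ∈ range n,
        (1 / ((a : ℝ) * (i + 1 : ℕ) + b) ^ (2 * k + 1) + 1 / ((a : ℝ) * i + b) ^ (2 * k + 1))) := by
  have hsin (i : ℕ) (hi : i ≤ n) :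
      ∫ u in (0 : ℝ)..1, bernoulliKernel k u * sin (2 * π * (a * i + b) * u) =
        (-1) ^ k / (2 * π) ^ (2 * k + 1) * (1 / ((a : ℝ) * i + b) ^ (2 * k + 1)) := by
    have hs : sin (2 * π * (a * i + b)) = 0 := by
      rw [show 2 * π * (a * i + b) = ((2 * (a * i + b) : ℤ) : ℝ) * π by push_cast; ring]
      exact sin_int_mul_pi _
    rw [integral_bernoulliKernel_mul_sin (mul_ne_zero (by positivity) (hab i hi)) hs, mul_pow]
    field_simp
  have hzero : ∀ᵐ u : ℝ, u ∉ {u : ℝ | sin (π * a * u) = 0} :=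
    MeasureTheory.measure_eq_zero_iff_ae_notMem.mp <|
      (countable_setOf_sin_mul_eq_zero
        (mul_ne_zero pi_ne_zero (by exact_mod_cast ha))).measure_zero _
  have hae : ∀ᵐ u : ℝ, u ∈ Set.uIoc 0 1 →
      bernoulliKernel k u * (cos (2 * π * (a * n + b) * u) - cos (2 * π * b * u)) *
        cot (π * a * u) =
      -∑ i ∈ range n, (bernoulliKernel k u * sin (2 * π * (a * (i + 1 : ℕ) + b) * u) +
        bernoulliKernel k u * sin (2 * π * (a * i + b) * u)) := by
    filter_upwards [hzero] with u hu _
    have h := cos_add_two_mul_sub_cos_mul_cot_eq_sum hu (2 * π * b * u) n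
    simp only [show ∀ x : ℝ, 2 * π * b * u + 2 * x * (π * a * u) = 2 * π * (a * x + b) * u from
      fun x => by ring] at h
    rw [mul_assoc, h, mul_neg, mul_sum]
    simp only [mul_add]
  have hcont (x : ℝ) : Continuous fun u => bernoulliKernel k u * sin (2 * π * x * u) :=
    (continuous_bernoulliKernel k).mul (by fun_prop)
  rw [integral_congr_ae hae, integral_neg, integral_finsetSum, mul_sum]
  swap
  · exact fun i _ => ((hcont _).add (hcont _)).intervalIntegrable 0 1
  congr 1
  refine sum_congr rfl fun i hi => ?_
  have hi := mem_range.mp hi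
  rw [integral_add ((hcont _).intervalIntegrable 0 1) ((hcont _).intervalIntegrable 0 1),
    hsin (i + 1) hi, hsin i hi.le, mul_add]

theorem stmt_10_general (a b : ℤ) (ha : a ≠ 0) (hb : b ≠ 0) (n : ℕ)
    (h : ∀ j : ℤ, 1 ≤ j → j ≤ n → a * j + b ≠ 0) (k : ℕ) :
    ∑ j ∈ Finset.Icc 1 n, (1 : ℝ) / (a * j + b) ^ (2 * k + 1) =
      -(1 / (2 * (b : ℝ) ^ (2 * k + 1))) + 1 / (2 * ((a : ℝ) * n + b) ^ (2 * k + 1))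
      - ((-1 : ℝ) ^ k * (2 * π) ^ (2 * k + 1) / 2) *
          ∫ u in (0:ℝ)..1,
            (∑ j ∈ Finset.range (k + 1),
                (bernoulli (2 * j) : ℝ) * (2 - 2 ^ (2 * j)) *
                  (1 - u) ^ (2 * k + 1 - 2 * j) /
                  ((Nat.factorial (2 * j)) * (Nat.factorial (2 * k + 1 - 2 * j)))) *
              (Real.cos (2 * π * (a * n + b) * u) - Real.cos (2 * π * b * u)) *
              Real.cot (π * a * u) := by
  have hab : ∀ i ≤ n, (a : ℝ) * i + b ≠ 0 := by
    intro i hi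
    rcases Nat.eq_zero_or_pos i with rfl | hi₀
    · simpa using hb
    · exact_mod_cast h i (by exact_mod_cast hi₀) (by exact_mod_cast hi)
  have htrapezoid := two_mul_sum_Icc_one_eq (fun i : ℕ => 1 / ((a : ℝ) * i + b) ^ (2 * k + 1)) n
  simp only [Nat.cast_zero, mul_zero, zero_add] at htrapezoid
  have hsign : ((-1 : ℝ) ^ k) ^ 2 = 1 := by rw [← pow_mul, pow_mul', neg_one_sq, one_pow]
  have hscale : (-1 : ℝ) ^ k * (2 * π) ^ (2 * k + 1) / 2 * ((-1) ^ k / (2 * π) ^ (2 * k + 1)) =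
      1 / 2 := by
    field_simp
    linear_combination hsign
  show _ = _ - _ * ∫ u in (0 : ℝ)..1, bernoulliKernel k u * _ * _
  rw [integral_bernoulliKernel_mul_cos_sub_cos_mul_cot a b ha n k hab, mul_neg, ← mul_assoc,
    hscale]
  simp only [one_div, mul_inv] at htrapezoid ⊢
  linear_combination htrapezoid / 2

theorem stmt_10 (a b : ℤ) (ha : a ≠ 0) (hb : b ≠ 0) (n : ℕ) (hn : 0 < n)
    (h : ∀ j : ℤ, 1 ≤ j → j ≤ n → a * j + b ≠ 0) (k : ℕ) :
    ∑ j ∈ Finset.Icc 1 n, (1 : ℝ) / (a * j + b) ^ (2 * k + 1) =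
      -(1 / (2 * (b : ℝ) ^ (2 * k + 1))) + 1 / (2 * ((a : ℝ) * n + b) ^ (2 * k + 1))
      - ((-1 : ℝ) ^ k * (2 * π) ^ (2 * k + 1) / 2) *
          ∫ u in (0:ℝ)..1,
            (∑ j ∈ Finset.range (k + 1),
                (bernoulli (2 * j) : ℝ) * (2 - 2 ^ (2 * j)) *
                  (1 - u) ^ (2 * k + 1 - 2 * j) /
                  ((Nat.factorial (2 * j)) * (Nat.factorial (2 * k + 1 - 2 * j)))) *
              (Real.cos (2 * π * (a * n + b) * u) - Real.cos (2 * π * b * u)) *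
              Real.cot (π * a * u) :=
  stmt_10_general a b ha hb n h k
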